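/- arXiv:2402.17221 — 2 statements merged into one kernel-verified Lean document; each statement's English description precedes it below -/
import Mathlib

section
/- For integers d ≥ 0 and n ≥ 0, the expected total number of generators satisfies E γ_{d,n} = Σ_{k=0}^d C(d,k) E ι_{k,n}, where ι_{k,n} is the expected number of interior generators in dimension k after n observations (and ι_{0,n} = 1 if n = 0, else 0). -/
open MeasureTheory ProbabilityTheory Set

/-- The record-setting region determined by points `X i : κ → ℝ` (coordinate set `κ`). -/
def RSreg {κ : Type*} {n : ℕ} (X : Fin n → κ → ℝ) : Set (κ → ℝ) :=
  {x | (∀ j, 0 ≤ x j) ∧ ∀ i, ¬ ∀ j, x j < X i j}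

/-- A generator: a minimal element of the record-setting region under coordinatewise `≤`. -/
def IsGen {κ : Type*} {n : ℕ} (X : Fin n → κ → ℝ) (g : κ → ℝ) : Prop :=
  g ∈ RSreg X ∧ ∀ x ∈ RSreg X, (∀ j, x j ≤ g j) → x = g

/-- An interior generator: a generator all of whose coordinates are nonzero. -/
def IsIntGen {κ : Type*} {n : ℕ} (X : Fin n → κ → ℝ) (g : κ → ℝ) : Prop :=
  IsGen X g ∧ ∀ j, 0 < g j

noncomputable def genCount {κ : Type*} {n : ℕ} (X : Fin n → κ → ℝ) : ℕ :=
  Nat.card {g | IsGen X g}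

noncomputable def intGenCount {κ : Type*} {n : ℕ} (X : Fin n → κ → ℝ) : ℕ :=
  Nat.card {g | IsIntGen X g}

/-!
Almost surely every observation has all coordinates positive. For such data, a generator whose
set of positive coordinates is `S` is exactly the extension by zero of an interior generator of
the observations projected onto the coordinates in `S`, so `γ_{d,n}` is the sum over `S` of the
interior-generator counts of the projections. A projection of an i.i.d. sample of Exponential(1)
vectors onto `k` coordinates is such a sample in dimension `k`, and there are `C(d,k)` sets `S`
of size `k`.

Measurability of the counts rests on two facts: minimality of a generator need only be tested
against lowering one coordinate to a rational value, and every coordinate of a generator is `0`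
or one of the `X i j`, so interior generators are parametrised by index maps `κ → Fin n`.
-/

section Deterministic

variable {κ : Type*} {n : ℕ} {X : Fin n → κ → ℝ}

lemma mem_RSreg_iff {x : κ → ℝ} :
    x ∈ RSreg X ↔ (∀ j, 0 ≤ x j) ∧ ∀ i, ∃ j, X i j ≤ x j := by
  simp only [RSreg, Set.mem_ofPred_eq, not_forall, not_lt]

lemma mem_RSreg_of_le {x y : κ → ℝ} (hx : x ∈ RSreg X) (hxy : x ≤ y) : y ∈ RSreg X := by
  rw [mem_RSreg_iff] at hx ⊢
  exact ⟨fun j => (hx.1 j).trans (hxy j), fun i => (hx.2 i).imp fun j h => h.trans (hxy j)⟩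

lemma isGen_iff_forall_rat [DecidableEq κ] {g : κ → ℝ} :
    IsGen X g ↔ g ∈ RSreg X ∧ ∀ j (q : ℚ), (q : ℝ) < g j → Function.update g j q ∉ RSreg X := by
  refine ⟨fun ⟨hg, hmin⟩ => ⟨hg, fun j q hq hupd => hq.ne ?_⟩, fun ⟨hg, hcrit⟩ => ⟨hg, ?_⟩⟩
  · have hle : Function.update g j q ≤ g :=
      (update_le_update_iff'.2 hq.le).trans_eq (Function.update_eq_self j g)
    simpa using congrFun (hmin _ hupd hle) j
  · intro x hx hxg
    by_contra hne
    obtain ⟨j, hj⟩ := Function.ne_iff.mp hne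
    obtain ⟨q, hxq, hqg⟩ := exists_rat_btwn ((hxg j).lt_of_ne hj)
    exact hcrit j q hqg (mem_RSreg_of_le hx (le_update_iff.2 ⟨hxq.le, fun j' _ => hxg j'⟩))

lemma exists_update_mem_RSreg [DecidableEq κ] {x : κ → ℝ} (hx : x ∈ RSreg X) (j : κ) :
    ∃ v, (v = 0 ∨ ∃ i, v = X i j) ∧ v ≤ x j ∧ Function.update x j v ∈ RSreg X := by
  set T := insert 0 ((Finset.univ.filter (X · j ≤ x j)).image (X · j))
  have hT : ∀ v ∈ T, v ≤ x j := by
    simp only [T, Finset.mem_insert, Finset.mem_image, Finset.mem_filter]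
    rintro v (rfl | ⟨i, ⟨-, hi⟩, rfl⟩)
    exacts [(mem_RSreg_iff.1 hx).1 j, hi]
  have hvT := T.max'_mem (Finset.insert_nonempty _ _)
  refine ⟨T.max' (Finset.insert_nonempty _ _), ?_, hT _ hvT,
    mem_RSreg_iff.2 ⟨fun j' => ?_, fun i => ?_⟩⟩
  · simp only [T, Finset.mem_insert, Finset.mem_image, Finset.mem_filter] at hvT
    rcases hvT with h | ⟨i, -, hi⟩
    exacts [Or.inl h, Or.inr ⟨i, hi.symm⟩]
  · rcases eq_or_ne j' j with rfl | hj'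
    · simpa using T.le_max' 0 (Finset.mem_insert_self _ _)
    · simpa [Function.update_of_ne hj'] using (mem_RSreg_iff.1 hx).1 j'
  · obtain ⟨j', hj'⟩ := (mem_RSreg_iff.1 hx).2 i
    refine ⟨j', ?_⟩
    rcases eq_or_ne j' j with rfl | hne
    · simpa using T.le_max' _ (Finset.mem_insert_of_mem
        (Finset.mem_image_of_mem _ (Finset.mem_filter.2 ⟨Finset.mem_univ _, hj'⟩)))
    · simpa [Function.update_of_ne hne] using hj'

lemma IsGen.eq_zero_or_exists_eq [DecidableEq κ] {g : κ → ℝ} (h : IsGen X g) (j : κ) :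
    g j = 0 ∨ ∃ i, g j = X i j := by
  obtain ⟨v, hv, hvg, hupd⟩ := exists_update_mem_RSreg h.1 j
  have hle : Function.update g j v ≤ g :=
    (update_le_update_iff'.2 hvg).trans_eq (Function.update_eq_self j g)
  have : v = g j := by simpa using congrFun (h.2 _ hupd hle) j
  exact this ▸ hv

lemma finite_setOf_isGen [Finite κ] (X : Fin n → κ → ℝ) : {g | IsGen X g}.Finite := by
  classical
  refine (Set.Finite.pi fun j => ((Set.finite_range fun i => X i j).insert 0)).subset
    fun g hg => Set.mem_univ_pi.2 fun j => ?_
  rcases (hg : IsGen X g).eq_zero_or_exists_eq j with h | ⟨i, h⟩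
  exacts [Or.inl h, Or.inr ⟨i, h.symm⟩]

lemma mem_RSreg_comp_equiv_iff {κ' : Type*} (e : κ' ≃ κ) {x : κ → ℝ} :
    x ∘ e ∈ RSreg (fun i => X i ∘ e) ↔ x ∈ RSreg X := by
  rw [mem_RSreg_iff, mem_RSreg_iff]
  exact and_congr (e.forall_congr_right (q := fun j => 0 ≤ x j))
    (forall_congr' fun i => e.exists_congr_right (q := fun j => X i j ≤ x j))

lemma isGen_comp_equiv_iff {κ' : Type*} (e : κ' ≃ κ) {g : κ → ℝ} :
    IsGen (fun i => X i ∘ e) (g ∘ e) ↔ IsGen X g := by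
  refine and_congr (mem_RSreg_comp_equiv_iff e) ⟨fun h x hx hxg => ?_, fun h x' hx' hxg' => ?_⟩
  · exact e.surjective.injective_comp_right
      (h _ ((mem_RSreg_comp_equiv_iff e).2 hx) fun j => hxg (e j))
  · have hx : (x' ∘ e.symm) ∘ e = x' := by ext; simp
    rw [← hx] at hx' ⊢
    exact congrArg (· ∘ e) (h _ ((mem_RSreg_comp_equiv_iff e).1 hx')
      fun j => by simpa using hxg' (e.symm j))

lemma intGenCount_comp_equiv {κ' : Type*} (e : κ' ≃ κ) (X : Fin n → κ → ℝ) :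
    intGenCount (fun i => X i ∘ e) = intGenCount X := by
  refine (Nat.card_congr (Equiv.subtypeEquiv (e.arrowCongr (Equiv.refl ℝ)).symm fun g => ?_)).symm
  change IsIntGen X g ↔ IsIntGen (fun i => X i ∘ e) (g ∘ e)
  exact and_congr (isGen_comp_equiv_iff e).symm (e.forall_congr_right (q := fun j => 0 < g j)).symm

lemma eq_zero_of_mem_RSreg_of_le {x g : κ → ℝ} (hx : x ∈ RSreg X) (hxg : x ≤ g) {j : κ}
    (hg : g j = 0) : x j = 0 :=
  le_antisymm ((hxg j).trans_eq hg) ((mem_RSreg_iff.1 hx).1 j)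

lemma mem_RSreg_restrict_iff {S : Finset κ} (hpos : ∀ i j, 0 < X i j) {x : κ → ℝ}
    (hx : ∀ j ∉ S, x j = 0) :
    S.restrict x ∈ RSreg (fun i => S.restrict (X i)) ↔ x ∈ RSreg X := by
  simp only [mem_RSreg_iff, Finset.restrict, Subtype.forall, Subtype.exists]
  refine and_congr ⟨fun h j => ?_, fun h j _ => h j⟩ (forall_congr' fun i => ⟨?_, ?_⟩)
  · by_cases hj : j ∈ S
    exacts [h j hj, (hx j hj).ge]
  · rintro ⟨j, -, hj⟩
    exact ⟨j, hj⟩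
  · rintro ⟨j, hj⟩
    by_cases hjS : j ∈ S
    · exact ⟨j, hjS, hj⟩
    · exact absurd (hj.trans_eq (hx j hjS)) (hpos i j).not_ge

lemma pos_iff_of_filter_pos_eq [Fintype κ] {S : Finset κ} {g : κ → ℝ}
    (hS : Finset.univ.filter (fun j => 0 < g j) = S) (j : κ) : 0 < g j ↔ j ∈ S := by
  simp [← hS]

lemma eq_zero_of_filter_pos_eq [Fintype κ] {S : Finset κ} {g : κ → ℝ} (hg : g ∈ RSreg X)
    (hS : Finset.univ.filter (fun j => 0 < g j) = S) (j : κ) (hj : j ∉ S) : g j = 0 :=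
  ((mem_RSreg_iff.1 hg).1 j).eq_of_not_lt' (mt (pos_iff_of_filter_pos_eq hS j).1 hj)

end Deterministic

section Support

variable {κ : Type*} [DecidableEq κ] {n : ℕ} {X : Fin n → κ → ℝ} (S : Finset κ)

def extendByZero (h : S → ℝ) : κ → ℝ := fun j => if hj : j ∈ S then h ⟨j, hj⟩ else 0

lemma restrict_extendByZero (h : S → ℝ) : S.restrict (extendByZero S h) = h := by
  ext j; simp [extendByZero, j.2]

lemma extendByZero_restrict {x : κ → ℝ} (hx : ∀ j ∉ S, x j = 0) :
    extendByZero S (S.restrict x) = x := by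
  ext j; by_cases hj : j ∈ S <;> simp [extendByZero, hj, hx]

lemma extendByZero_mono : Monotone (extendByZero S) := by
  intro h h' hh j
  by_cases hj : j ∈ S
  · simpa [extendByZero, hj] using hh ⟨j, hj⟩
  · simp [extendByZero, hj]

variable {S}

lemma isGen_restrict_iff (hpos : ∀ i j, 0 < X i j) {g : κ → ℝ} (hg : ∀ j ∉ S, g j = 0) :
    IsGen (fun i => S.restrict (X i)) (S.restrict g) ↔ IsGen X g := by
  refine and_congr (mem_RSreg_restrict_iff hpos hg) ⟨fun h x hx hxg => ?_, fun h y hy hyg => ?_⟩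
  · have hx0 : ∀ j ∉ S, x j = 0 := fun j hj => eq_zero_of_mem_RSreg_of_le hx hxg (hg j hj)
    rw [← extendByZero_restrict S hx0, ← extendByZero_restrict S hg]
    exact congrArg (extendByZero S)
      (h _ ((mem_RSreg_restrict_iff hpos hx0).2 hx) fun j => hxg j)
  · have hy0 : ∀ j ∉ S, extendByZero S y j = 0 := fun j hj => dif_neg hj
    rw [← restrict_extendByZero S y] at hy ⊢
    refine congrArg S.restrict (h _ ((mem_RSreg_restrict_iff hpos hy0).1 hy) ?_)
    rw [← extendByZero_restrict S hg]
    exact extendByZero_mono S hyg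

def isGenFiberEquivIntGen [Fintype κ] (hpos : ∀ i j, 0 < X i j) (S : Finset κ) :
    {g : {g // IsGen X g} // Finset.univ.filter (fun j => 0 < g.1 j) = S} ≃
      {h : S → ℝ // IsIntGen (fun i => S.restrict (X i)) h} where
  toFun g := ⟨S.restrict g.1.1,
    (isGen_restrict_iff hpos (eq_zero_of_filter_pos_eq g.1.2.1 g.2)).2 g.1.2,
    fun j => (pos_iff_of_filter_pos_eq g.2 j).2 j.2⟩
  invFun h := ⟨⟨extendByZero S h.1, (isGen_restrict_iff hpos fun j hj => dif_neg hj).1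
    ((restrict_extendByZero S h.1).symm ▸ h.2.1)⟩, by
      ext j
      rw [Finset.mem_filter]
      by_cases hj : j ∈ S
      · simpa [extendByZero, hj] using h.2.2 ⟨j, hj⟩
      · simp [extendByZero, hj]⟩
  left_inv g := Subtype.ext <| Subtype.ext <|
    extendByZero_restrict S (eq_zero_of_filter_pos_eq g.1.2.1 g.2)
  right_inv h := Subtype.ext (restrict_extendByZero S h.1)

lemma genCount_eq_sum_intGenCount [Fintype κ] (hpos : ∀ i j, 0 < X i j) :
    genCount X = ∑ S : Finset κ, intGenCount (fun i => S.restrict (X i)) := by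
  have : Finite {g // IsGen X g} := (finite_setOf_isGen X).to_subtype
  calc genCount X = Nat.card (Σ S : Finset κ,
        {g : {g // IsGen X g} // Finset.univ.filter (fun j => 0 < g.1 j) = S}) :=
        (Nat.card_congr (Equiv.sigmaFiberEquiv _)).symm
    _ = _ := by
      rw [Nat.card_sigma]
      exact Finset.sum_congr rfl fun S _ => Nat.card_congr (isGenFiberEquivIntGen hpos S)

end Support

section Canonical

variable {κ : Type*} {n : ℕ}

/-- Requiring `c j` to be the least index realising coordinate `j` makes `c` unique for a given
interior generator. -/
def IsCanonicalIndex (X : Fin n → κ → ℝ) (c : κ → Fin n) : Prop :=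
  IsIntGen X (fun j => X (c j) j) ∧ ∀ j i, X i j = X (c j) j → c j ≤ i

lemma exists_isCanonicalIndex {X : Fin n → κ → ℝ} {g : κ → ℝ} (hg : IsIntGen X g) :
    ∃ c, IsCanonicalIndex X c ∧ (fun j => X (c j) j) = g := by
  classical
  have hne : ∀ j, ∃ i, X i j = g j := fun j =>
    ((hg.1.eq_zero_or_exists_eq j).resolve_left (hg.2 j).ne').imp fun _ => Eq.symm
  choose c hc hmin using fun j => wellFounded_lt.has_min {i | X i j = g j} (hne j)
  have hcg : (fun j => X (c j) j) = g := funext hc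
  exact ⟨c, ⟨hcg ▸ hg, fun j i hi => not_lt.1 (hmin j i (hi.trans (hc j)))⟩, hcg⟩

lemma intGenCount_eq_card_isCanonicalIndex (X : Fin n → κ → ℝ) :
    intGenCount X = Nat.card {c // IsCanonicalIndex X c} := by
  refine (Nat.card_congr (Equiv.ofBijective (fun c => ⟨_, c.2.1⟩) ⟨?_, ?_⟩)).symm
  · rintro ⟨c, hc⟩ ⟨c', hc'⟩ h
    have h' : ∀ j, X (c j) j = X (c' j) j := fun j => congrFun (congrArg Subtype.val h) j
    exact Subtype.ext <| funext fun j => le_antisymm (hc.2 j _ (h' j).symm) (hc'.2 j _ (h' j))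
  · rintro ⟨g, hg⟩
    obtain ⟨c, hc, rfl⟩ := exists_isCanonicalIndex hg
    exact ⟨⟨c, hc⟩, rfl⟩

lemma intGenCount_le [Finite κ] (X : Fin n → κ → ℝ) : intGenCount X ≤ n ^ Nat.card κ := by
  calc intGenCount X ≤ Nat.card (κ → Fin n) :=
        intGenCount_eq_card_isCanonicalIndex X ▸ Finite.card_subtype_le _
    _ = n ^ Nat.card κ := by rw [Nat.card_fun, Nat.card_fin]

end Canonical

section Measurability

variable {κ : Type*} [Countable κ] {n : ℕ}

lemma measurableSet_mem_RSreg :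
    MeasurableSet {p : (Fin n → κ → ℝ) × (κ → ℝ) | p.2 ∈ RSreg p.1} := by
  simp only [mem_RSreg_iff, Set.ofPred_and]
  measurability

lemma measurableSet_isGen [DecidableEq κ] :
    MeasurableSet {p : (Fin n → κ → ℝ) × (κ → ℝ) | IsGen p.1 p.2} := by
  simp only [isGen_iff_forall_rat, Set.ofPred_and, Set.ofPred_forall]
  refine measurableSet_mem_RSreg.inter (.iInter fun j => .iInter fun q => ?_)
  have hupd : Measurable fun p : (Fin n → κ → ℝ) × (κ → ℝ) =>
      (p.1, Function.update p.2 j (q : ℝ)) := by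
    fun_prop
  have hlt : MeasurableSet {p : (Fin n → κ → ℝ) × (κ → ℝ) | (q : ℝ) < p.2 j} :=
    measurableSet_lt measurable_const (by fun_prop)
  exact measurableSet_setOfPred.2 <| (measurableSet_setOfPred.1 hlt).imp
    (measurableSet_setOfPred.1 (hupd measurableSet_mem_RSreg)).not

lemma measurableSet_isCanonicalIndex (c : κ → Fin n) :
    MeasurableSet {X : Fin n → κ → ℝ | IsCanonicalIndex X c} := by
  classical
  have hgen : Measurable fun X : Fin n → κ → ℝ => (X, fun j => X (c j) j) := by fun_prop
  simp only [IsCanonicalIndex, IsIntGen, Set.ofPred_and]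
  refine ((hgen measurableSet_isGen).inter ?_).inter ?_
  · measurability
  · measurability

lemma measurable_intGenCount [Finite κ] :
    Measurable fun X : Fin n → κ → ℝ => (intGenCount X : ℝ) := by
  classical
  have : Fintype κ := Fintype.ofFinite κ
  simp only [intGenCount_eq_card_isCanonicalIndex, Nat.card_eq_fintype_card, Fintype.card_subtype,
    Finset.card_filter, Nat.cast_sum, Nat.cast_ite, Nat.cast_one, Nat.cast_zero]
  exact Finset.measurable_sum _ fun c _ =>
    Measurable.ite (measurableSet_isCanonicalIndex c) measurable_const measurable_const

end Measurability

section Probability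

variable {Ω : Type*} [MeasurableSpace Ω] {μ : Measure Ω}

lemma MeasureTheory.Measure.pi_map_comp_injective {α ι ι' : Type*} [MeasurableSpace α]
    [Fintype ι] [Fintype ι'] {f : ι' → ι} (hf : Function.Injective f) (ν : Measure α)
    [IsProbabilityMeasure ν] :
    (Measure.pi fun _ : ι => ν).map (fun x => x ∘ f) = Measure.pi fun _ : ι' => ν := by
  classical
  let e := Equiv.ofInjective f hf
  have hfac : (fun x : ι → α => x ∘ f) =
      MeasurableEquiv.piCongrLeft (fun _ => α) e.symm ∘ (Set.range f).domRestrict := by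
    ext x i
    simp [MeasurableEquiv.coe_piCongrLeft, Equiv.piCongrLeft_apply, e, Set.domRestrict]
  rw [hfac, ← Measure.map_map (MeasurableEquiv.measurable _) (by fun_prop),
    ← Measure.infinitePi_eq_pi, Measure.infinitePi_map_restrict', Measure.infinitePi_eq_pi]
  exact Measure.pi_map_piCongrLeft e.symm fun _ => ν

lemma ae_pos_expMeasure (r : ℝ) : ∀ᵐ x ∂expMeasure r, 0 < x := by
  have hpdf : Measurable (gammaPDF 1 r) := (measurable_gammaPDFReal 1 r).ennreal_ofReal
  refine (ae_withDensity_iff hpdf).2 ?_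
  filter_upwards [Measure.ae_ne volume 0] with x hx hpdf
  exact lt_of_le_of_ne (not_lt.1 fun h => hpdf (gammaPDF_of_neg h)) hx.symm

lemma map_eq_pi_of_iIndepFun {ι β : Type*} [Fintype ι] [MeasurableSpace β] {Z : ι → Ω → β}
    (hmeas : ∀ i, Measurable (Z i)) (hindep : iIndepFun Z μ) {ν : Measure β}
    (hlaw : ∀ i, μ.map (Z i) = ν) :
    μ.map (fun ω i => Z i ω) = Measure.pi fun _ => ν :=
  (hindep.map_fun_eq_pi_map fun i => (hmeas i).aemeasurable).trans (congrArg _ (funext hlaw))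

variable {n : ℕ} {ι : Type*} [Fintype ι]

lemma ae_forall_pos_of_map_eq {X : Ω → Fin n → ι → ℝ} (hX : Measurable X) {ν : Measure ℝ}
    [SigmaFinite ν] (hν : ∀ᵐ x ∂ν, 0 < x)
    (hlaw : μ.map X = Measure.pi fun _ => Measure.pi fun _ => ν) :
    ∀ᵐ ω ∂μ, ∀ i j, 0 < X ω i j := by
  refine ae_of_ae_map (p := fun x => ∀ i j, 0 < x i j) hX.aemeasurable ?_
  rw [hlaw]
  have hcoord : ∀ᵐ y ∂(Measure.pi fun _ : ι => ν), ∀ j, 0 < y j :=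
    ae_all_iff.2 fun j => Measure.tendsto_eval_ae_ae.eventually hν
  exact ae_all_iff.2 fun i => (Measure.tendsto_eval_ae_ae
    (μ := fun _ : Fin n => Measure.pi fun _ : ι => ν)).eventually hcoord

lemma integrable_intGenCount [IsFiniteMeasure μ] {X : Ω → Fin n → ι → ℝ} (hX : Measurable X) :
    Integrable (fun ω => (intGenCount (X ω) : ℝ)) μ := by
  refine .of_bound (measurable_intGenCount.comp hX).aestronglyMeasurable (n ^ Nat.card ι) ?_
  refine .of_forall fun ω => ?_
  rw [Real.norm_natCast]
  exact_mod_cast intGenCount_le (X ω)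

lemma integral_intGenCount_restrict (S : Finset ι) {X : Ω → Fin n → ι → ℝ}
    {X' : Ω → Fin n → Fin S.card → ℝ} (hX : Measurable X) (hX' : Measurable X')
    {ν : Measure ℝ} [IsProbabilityMeasure ν]
    (hlaw : μ.map X = Measure.pi fun _ => Measure.pi fun _ => ν)
    (hlaw' : μ.map X' = Measure.pi fun _ => Measure.pi fun _ => ν) :
    ∫ ω, (intGenCount (fun i => S.restrict (X ω i)) : ℝ) ∂μ =
      ∫ ω, (intGenCount (X' ω) : ℝ) ∂μ := by
  let f : Fin S.card → ι := Subtype.val ∘ S.equivFin.symm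
  have hf : Function.Injective f := Subtype.val_injective.comp S.equivFin.symm.injective
  have hrelabel : ∀ ω,
      intGenCount (fun i => S.restrict (X ω i)) = intGenCount (fun i => X ω i ∘ f) :=
    fun ω => (intGenCount_comp_equiv S.equivFin.symm _).symm
  have hf' : Measurable fun y : ι → ℝ => y ∘ f := by fun_prop
  have hcomp : Measurable fun (x : Fin n → ι → ℝ) i => x i ∘ f := by fun_prop
  have hmap : μ.map (fun ω i => X ω i ∘ f) = μ.map X' := by
    rw [hlaw', show (fun ω i => X ω i ∘ f) = (fun x i => x i ∘ f) ∘ X from rfl,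
      ← Measure.map_map hcomp hX, hlaw,
      Measure.pi_map_pi (f := fun _ y => y ∘ f) fun _ => hf'.aemeasurable,
      Measure.pi_map_comp_injective hf]
  simp_rw [hrelabel]
  exact ((IdentDistrib.mk (hcomp.comp hX).aemeasurable hX'.aemeasurable hmap).comp
    measurable_intGenCount).integral_eq

end Probability

/-- `E γ_{d,n} = ∑_{k=0}^d C(d,k) E ι_{k,n}`, where for each dimension `k ≤ d` the
observations `Y k` are i.i.d. with `k` independent Exponential(1) coordinates. -/
theorem stmt8 {Ω : Type*} [MeasurableSpace Ω] (μ : Measure Ω) [IsProbabilityMeasure μ]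
    (d n : ℕ)
    (Y : (k : ℕ) → Fin n → Ω → Fin k → ℝ)
    (hmeas : ∀ k ≤ d, ∀ i, Measurable (Y k i))
    (hindep : ∀ k ≤ d, iIndepFun (Y k) μ)
    (hlaw : ∀ k ≤ d, ∀ i, μ.map (Y k i) = Measure.pi fun _ : Fin k => expMeasure 1) :
    ∫ ω, (genCount (fun i => Y d i ω) : ℝ) ∂μ =
      ∑ k ∈ Finset.range (d + 1),
        (d.choose k : ℝ) * ∫ ω, (intGenCount (fun i => Y k i ω) : ℝ) ∂μ := by
  have : IsProbabilityMeasure (expMeasure 1) := isProbabilityMeasure_expMeasure one_pos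
  have hX : ∀ k ≤ d, Measurable fun ω i => Y k i ω :=
    fun k hk => measurable_pi_lambda _ (hmeas k hk)
  have hjoint : ∀ k ≤ d, μ.map (fun ω i => Y k i ω) =
      Measure.pi fun _ => Measure.pi fun _ => expMeasure 1 :=
    fun k hk => map_eq_pi_of_iIndepFun (hmeas k hk) (hindep k hk) (hlaw k hk)
  have hcard : ∀ S : Finset (Fin d), S.card ≤ d := fun S => card_finset_fin_le S
  calc ∫ ω, (genCount (fun i => Y d i ω) : ℝ) ∂μ
      = ∫ ω, ∑ S : Finset (Fin d), (intGenCount (fun i => S.restrict (Y d i ω)) : ℝ) ∂μ := by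
        refine integral_congr_ae ((ae_forall_pos_of_map_eq (hX d le_rfl) (ae_pos_expMeasure 1)
          (hjoint d le_rfl)).mono fun ω hpos => ?_)
        simp [genCount_eq_sum_intGenCount hpos]
    _ = ∑ S : Finset (Fin d), ∫ ω, (intGenCount (fun i => Y S.card i ω) : ℝ) ∂μ := by
        have hYd := hmeas d le_rfl
        rw [integral_finsetSum _ fun S _ => integrable_intGenCount (by fun_prop)]
        exact Finset.sum_congr rfl fun S _ => integral_intGenCount_restrict S (hX d le_rfl)
          (hX _ (hcard S)) (hjoint d le_rfl) (hjoint _ (hcard S))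
    _ = _ := by
        rw [← Finset.powerset_univ,
          Finset.sum_powerset_apply_card fun k => ∫ ω, (intGenCount (fun i => Y k i ω) : ℝ) ∂μ]
        simp [nsmul_eq_mul]
end

section
/- In dimension d = 2, for every n ≥ 0, E γ_{2,n} = H_n + 1 = E ρ_{2,n} + 1, where H_n is the n-th harmonic number; indeed γ_{2,n} = ρ_{2,n} + 1 deterministically (almost surely). -/
/-!
For points of the open quadrant with pairwise distinct coordinates, the record-setting region is
the part of the quadrant above a staircase `t ↦ max (0, max {y_i : x_i > t})`, and its minimal
points are the corners of the staircase at the places where it drops. It drops at `0` and at the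
abscissa of each remaining record, and nowhere else, so there is exactly one more generator than
there are records; an i.i.d. exponential sample is in this general position almost surely.

For the mean, point `i` is a record iff none of the other `n - 1` points dominates it. Given
`X i = (a, b)` this has probability `(1 - e^{-a} e^{-b})^{n-1}`; integrating in `b` and then in `a`
gives `H_n / n`.
-/

open MeasureTheory ProbabilityTheory Set

/-- Number of remaining Pareto records. -/
noncomputable def recCount {κ : Type*} {n : ℕ} (X : Fin n → κ → ℝ) : ℕ :=
  Nat.card {i : Fin n | ∀ k, ¬ ∀ j, X i j < X k j}

open Function
open scoped ENNReal

section Staircase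

variable {n : ℕ}

/-- `RSreg p` is the part of the closed quadrant on or above the graph of `staircase p`. -/
noncomputable def staircase (p : Fin n → Fin 2 → ℝ) (t : ℝ) : ℝ :=
  Finset.univ.fold max 0 fun i => if t < p i 0 then p i 1 else 0

def IsRecord (p : Fin n → Fin 2 → ℝ) (i : Fin n) : Prop :=
  ∀ k, ¬ ∀ j, p i j < p k j

noncomputable def corner (p : Fin n → Fin 2 → ℝ) (t : ℝ) : Fin 2 → ℝ :=
  ![t, staircase p t]

def DropsAt (p : Fin n → Fin 2 → ℝ) (t : ℝ) : Prop :=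
  0 ≤ t ∧ ∀ s ∈ Ico 0 t, staircase p t < staircase p s

variable {p : Fin n → Fin 2 → ℝ} {s t c : ℝ}

lemma staircase_le_iff : staircase p t ≤ c ↔ 0 ≤ c ∧ ∀ i, t < p i 0 → p i 1 ≤ c := by
  simp only [staircase, Finset.fold_max_le, Finset.mem_univ, true_implies]
  refine and_congr_right fun hc => forall_congr' fun i => ?_
  split_ifs with hi <;> simp [hi, hc]

lemma staircase_lt_iff : staircase p t < c ↔ 0 < c ∧ ∀ i, t < p i 0 → p i 1 < c := by
  simp only [staircase, Finset.fold_max_lt, Finset.mem_univ, true_implies]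
  refine and_congr_right fun hc => forall_congr' fun i => ?_
  split_ifs with hi <;> simp [hi, hc]

lemma staircase_nonneg : 0 ≤ staircase p t :=
  (staircase_le_iff.1 le_rfl).1

lemma le_staircase {i : Fin n} (hi : t < p i 0) : p i 1 ≤ staircase p t :=
  (staircase_le_iff.1 le_rfl).2 i hi

@[simp] lemma corner_zero : corner p t 0 = t := rfl

@[simp] lemma corner_one : corner p t 1 = staircase p t := rfl

lemma mem_RSreg_iff_s14 {x : Fin 2 → ℝ} :
    x ∈ RSreg p ↔ 0 ≤ x 0 ∧ staircase p (x 0) ≤ x 1 := by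
  simp only [RSreg, mem_ofPred_eq, Fin.forall_fin_two, staircase_le_iff, not_and, not_lt]
  exact and_assoc

lemma corner_mem_RSreg (ht : 0 ≤ t) : corner p t ∈ RSreg p :=
  mem_RSreg_iff_s14.2 ⟨ht, le_rfl⟩

lemma eq_corner_iff {x : Fin 2 → ℝ} : x = corner p t ↔ x 0 = t ∧ x 1 = staircase p t := by
  refine ⟨by rintro rfl; simp, fun ⟨h0, h1⟩ => ?_⟩
  ext j
  fin_cases j <;> simp [h0, h1]

lemma corner_injective : Injective (corner p) :=
  fun _ _ h => (eq_corner_iff.1 h).1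

lemma IsGen.eq_corner {g : Fin 2 → ℝ} (hg : IsGen p g) : g = corner p (g 0) := by
  have hmem := mem_RSreg_iff_s14.1 hg.1
  refine (hg.2 _ (corner_mem_RSreg hmem.1) ?_).symm
  simpa [Fin.forall_fin_two] using hmem.2

lemma IsGen.dropsAt {g : Fin 2 → ℝ} (hg : IsGen p g) : DropsAt p (g 0) := by
  have hg1 : g 1 = staircase p (g 0) := (eq_corner_iff.1 hg.eq_corner).2
  refine ⟨(mem_RSreg_iff_s14.1 hg.1).1, fun s ⟨hs0, hsg⟩ => ?_⟩
  by_contra! hle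
  have hmem : ![s, g 1] ∈ RSreg p := mem_RSreg_iff_s14.2 ⟨hs0, by simpa [hg1] using hle⟩
  have hsg' := congrFun (hg.2 _ hmem (by simp [Fin.forall_fin_two, hsg.le])) 0
  simp only [Matrix.cons_val_zero] at hsg'
  exact hsg.ne hsg'

lemma isGen_corner (hdrop : DropsAt p t) : IsGen p (corner p t) := by
  refine ⟨corner_mem_RSreg hdrop.1, fun x hx hle => ?_⟩
  obtain ⟨hx0, hx1⟩ := mem_RSreg_iff_s14.1 hx
  simp only [Fin.forall_fin_two, corner_zero, corner_one] at hle
  have hxt : x 0 = t := by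
    by_contra hne
    exact (hdrop.2 _ ⟨hx0, hle.1.lt_of_ne hne⟩).not_ge (hx1.trans hle.2)
  exact eq_corner_iff.2 ⟨hxt, le_antisymm hle.2 (hxt ▸ hx1)⟩

lemma setOf_isGen_eq_image_corner : {g | IsGen p g} = corner p '' {t | DropsAt p t} := by
  ext g
  refine ⟨fun hg => ⟨g 0, hg.dropsAt, hg.eq_corner.symm⟩, ?_⟩
  rintro ⟨t, hdrop, rfl⟩
  exact isGen_corner hdrop

lemma exists_of_lt_staircase (hc : 0 ≤ c) (h : c < staircase p s) :
    ∃ i, s < p i 0 ∧ c < p i 1 := by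
  by_contra! h'
  exact h.not_ge (staircase_le_iff.2 ⟨hc, h'⟩)

lemma staircase_lt_of_isRecord {i : Fin n} (hpos : 0 < p i 1) (h1 : Injective fun i => p i 1)
    (hi : IsRecord p i) : staircase p (p i 0) < p i 1 := by
  refine staircase_lt_iff.2 ⟨hpos, fun k hk => ?_⟩
  have hle : p k 1 ≤ p i 1 := by
    have := hi k
    simp only [Fin.forall_fin_two, not_and, not_lt] at this
    exact this hk
  exact hle.lt_of_ne (h1.ne (by rintro rfl; exact lt_irrefl _ hk))

lemma dropsAt_zero : DropsAt p 0 :=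
  ⟨le_rfl, fun _ hs => absurd hs.2 (not_lt.2 hs.1)⟩

lemma dropsAt_of_isRecord {i : Fin n} (hpos : ∀ j, 0 < p i j) (h1 : Injective fun i => p i 1)
    (hi : IsRecord p i) : DropsAt p (p i 0) :=
  ⟨(hpos 0).le, fun _ hs =>
    (staircase_lt_of_isRecord (hpos 1) h1 hi).trans_le (le_staircase hs.2)⟩

/-- The record is the rightmost of the points lying above the level `staircase p t`. -/
lemma exists_isRecord_of_dropsAt (ht : 0 < t) (hdrop : DropsAt p t) :
    ∃ i, IsRecord p i ∧ p i 0 = t := by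
  classical
  set S := Finset.univ.filter fun i => staircase p t < p i 1
  obtain ⟨i, hi0, hi1⟩ := exists_of_lt_staircase staircase_nonneg (hdrop.2 0 ⟨le_rfl, ht⟩)
  obtain ⟨i₀, hi₀S, hi₀max⟩ :=
    S.exists_max_image (fun i => p i 0) ⟨i, by simp [S, hi1]⟩
  have hi₀ : staircase p t < p i₀ 1 := by simpa [S] using hi₀S
  have hle : p i₀ 0 ≤ t := by
    by_contra! h
    exact (le_staircase h).not_gt hi₀
  have hge : t ≤ p i₀ 0 := by
    by_contra! h
    have hi₀0 : 0 ≤ p i₀ 0 := (hi0.trans_le (hi₀max i (by simp [S, hi1]))).le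
    obtain ⟨k, hk0, hk1⟩ := exists_of_lt_staircase staircase_nonneg (hdrop.2 _ ⟨hi₀0, h⟩)
    exact (hi₀max k (by simp [S, hk1])).not_gt hk0
  have heq : p i₀ 0 = t := le_antisymm hle hge
  refine ⟨i₀, fun k hk => ?_, heq⟩
  have := le_staircase (heq ▸ hk 0)
  linarith [hk 1]

lemma setOf_dropsAt_eq (hpos : ∀ i j, 0 < p i j) (h1 : Injective fun i => p i 1) :
    {t | DropsAt p t} = insert 0 ((fun i => p i 0) '' {i | IsRecord p i}) := by
  ext t
  constructor
  · intro ht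
    rcases ht.1.eq_or_lt with rfl | htpos
    · exact mem_insert _ _
    · obtain ⟨i, hi, rfl⟩ := exists_isRecord_of_dropsAt htpos ht
      exact mem_insert_of_mem _ ⟨i, hi, rfl⟩
  · rintro (rfl | ⟨i, hi, rfl⟩)
    · exact dropsAt_zero
    · exact dropsAt_of_isRecord (hpos i) h1 hi

theorem genCount_eq_recCount_add_one (hpos : ∀ i j, 0 < p i j) (h0 : Injective fun i => p i 0)
    (h1 : Injective fun i => p i 1) : genCount p = recCount p + 1 := by
  have hzero : (0 : ℝ) ∉ (fun i => p i 0) '' {i | IsRecord p i} := by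
    rintro ⟨i, -, hi⟩
    exact (hpos i 0).ne' hi
  rw [genCount, recCount, setOf_isGen_eq_image_corner, setOf_dropsAt_eq hpos h1,
    Nat.card_coe_set_eq, Nat.card_coe_set_eq, ncard_image_of_injective _ corner_injective,
    ncard_insert_of_notMem hzero (toFinite _), ncard_image_of_injective _ h0]
  rfl

end Staircase

section Calculus

open Filter Topology Real

lemma lintegral_Ici_ofReal_eq_of_hasDerivAt {f G : ℝ → ℝ} {a l : ℝ}
    (hderiv : ∀ x ∈ Ici a, HasDerivAt G (f x) x) (hf : ∀ x ∈ Ioi a, 0 ≤ f x)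
    (hG : Tendsto G atTop (𝓝 l)) :
    ∫⁻ x in Ici a, ENNReal.ofReal (f x) = ENNReal.ofReal (l - G a) := by
  have hcont : ContinuousWithinAt G (Ici a) a :=
    (hderiv a self_mem_Ici).continuousAt.continuousWithinAt
  have hderiv' : ∀ x ∈ Ioi a, HasDerivAt G (f x) x :=
    fun x hx => hderiv x (Ioi_subset_Ici_self hx)
  rw [← setLIntegral_congr Ioi_ae_eq_Ici, ← ofReal_integral_eq_lintegral_ofReal
    (integrableOn_Ioi_deriv_of_nonneg hcont hderiv' hf hG)
    ((ae_restrict_iff' measurableSet_Ioi).2 (ae_of_all _ hf)),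
    integral_Ioi_of_hasDerivAt_of_nonneg hcont hderiv' hf hG]

lemma hasDerivAt_one_sub_mul_exp_neg (c x : ℝ) :
    HasDerivAt (fun y => 1 - c * exp (-y)) (c * exp (-x)) x := by
  simpa using ((hasDerivAt_neg x).exp.const_mul c).const_sub 1

lemma lintegral_exp_neg_mul_one_sub_mul_exp_neg_pow {c : ℝ} (hc0 : 0 < c) (hc1 : c ≤ 1)
    (m : ℕ) :
    ∫⁻ x in Ici 0, ENNReal.ofReal (exp (-x) * (1 - c * exp (-x)) ^ m)
      = ENNReal.ofReal ((1 - (1 - c) ^ (m + 1)) / ((m + 1) * c)) := by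
  have hderiv (x : ℝ) : HasDerivAt (fun y => (1 - c * exp (-y)) ^ (m + 1) / ((m + 1) * c))
      (exp (-x) * (1 - c * exp (-x)) ^ m) x := by
    refine (((hasDerivAt_one_sub_mul_exp_neg c x).fun_pow (m + 1)).div_const _).congr_deriv ?_
    push_cast
    field_simp
  have hlim : Tendsto (fun y => (1 - c * exp (-y)) ^ (m + 1) / ((m + 1) * c)) atTop
      (𝓝 ((1 - c * 0) ^ (m + 1) / ((m + 1) * c))) :=
    ((tendsto_const_nhds.sub (tendsto_exp_neg_atTop_nhds_zero.const_mul c)).pow _).div_const _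
  have hnonneg (x : ℝ) (hx : x ∈ Ioi (0 : ℝ)) : 0 ≤ exp (-x) * (1 - c * exp (-x)) ^ m := by
    have : c * exp (-x) ≤ 1 :=
      mul_le_one₀ hc1 (exp_nonneg _) (exp_le_one_iff.2 (neg_nonpos.2 (le_of_lt hx)))
    exact mul_nonneg (exp_nonneg _) (pow_nonneg (sub_nonneg.2 this) m)
  rw [lintegral_Ici_ofReal_eq_of_hasDerivAt (fun x _ => hderiv x) hnonneg hlim]
  congr 1
  simp only [neg_zero, exp_zero, mul_one, mul_zero, sub_zero, one_pow]
  ring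

lemma lintegral_one_sub_one_sub_exp_neg_pow_div (n : ℕ) {d : ℝ} (hd : 0 < d) :
    ∫⁻ x in Ici 0, ENNReal.ofReal ((1 - (1 - exp (-x)) ^ n) / d)
      = ENNReal.ofReal ((∑ k ∈ Finset.range n, 1 / ((k : ℝ) + 1)) / d) := by
  set G : ℝ → ℝ :=
    fun x => (∑ k ∈ Finset.range n, (1 - exp (-x)) ^ (k + 1) / ((k : ℝ) + 1)) / d
  have hderiv (x : ℝ) : HasDerivAt G ((1 - (1 - exp (-x)) ^ n) / d) x := by
    have hterm (k : ℕ) (_ : k ∈ Finset.range n) :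
        HasDerivAt (fun y => (1 - exp (-y)) ^ (k + 1) / ((k : ℝ) + 1))
          ((1 - exp (-x)) ^ k * exp (-x)) x := by
      have h := ((hasDerivAt_one_sub_mul_exp_neg 1 x).fun_pow (k + 1)).div_const ((k : ℝ) + 1)
      simp only [one_mul] at h
      refine h.congr_deriv ?_
      push_cast
      field_simp
    refine ((HasDerivAt.fun_sum hterm).div_const d).congr_deriv ?_
    rw [← Finset.sum_mul, mul_comm, ← mul_neg_geom_sum, sub_sub_cancel]
  have hlim : Tendsto G atTop
      (𝓝 ((∑ k ∈ Finset.range n, (1 - 0) ^ (k + 1) / ((k : ℝ) + 1)) / d)) :=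
    (tendsto_finsetSum _ fun k _ =>
      ((tendsto_const_nhds.sub tendsto_exp_neg_atTop_nhds_zero).pow _).div_const _).div_const _
  have hnonneg (x : ℝ) (hx : x ∈ Ioi (0 : ℝ)) : 0 ≤ (1 - (1 - exp (-x)) ^ n) / d := by
    have hexp : exp (-x) ≤ 1 := exp_le_one_iff.2 (neg_nonpos.2 (le_of_lt hx))
    have : (1 - exp (-x)) ^ n ≤ 1 :=
      pow_le_one₀ (sub_nonneg.2 hexp) (by linarith [exp_pos (-x)])
    exact div_nonneg (sub_nonneg.2 this) hd.le
  rw [lintegral_Ici_ofReal_eq_of_hasDerivAt (fun x _ => hderiv x) hnonneg hlim]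
  simp [G]

end Calculus

section ExponentialLaw

open Real

instance : IsProbabilityMeasure (expMeasure 1) := isProbabilityMeasure_expMeasure one_pos

instance : NullSingletonClass (expMeasure 1) :=
  inferInstanceAs (NullSingletonClass (volume.withDensity (exponentialPDF 1)))

lemma expMeasure_one_Ioi {a : ℝ} (ha : 0 ≤ a) :
    expMeasure 1 (Ioi a) = ENNReal.ofReal (exp (-a)) := by
  have hexp : exp (-a) ≤ 1 := exp_le_one_iff.2 (neg_nonpos.2 ha)
  rw [← compl_Iic, prob_compl_eq_one_sub measurableSet_Iic, ← ofReal_cdf,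
    cdf_expMeasure_eq one_pos, if_pos ha, one_mul, ← ENNReal.ofReal_one,
    ← ENNReal.ofReal_sub _ (sub_nonneg.2 hexp), sub_sub_cancel]

lemma ae_expMeasure_one_pos : ∀ᵐ x ∂expMeasure 1, 0 < x := by
  have h : expMeasure 1 (Iic 0) = 0 := by
    rw [← ofReal_cdf, cdf_expMeasure_eq one_pos, if_pos le_rfl]
    simp
  filter_upwards [measure_eq_zero_iff_ae_notMem.1 h] with x hx
  exact not_le.1 hx

lemma lintegral_expMeasure_one (f : ℝ → ℝ≥0∞) :
    ∫⁻ x, f x ∂expMeasure 1 = ∫⁻ x in Ici 0, ENNReal.ofReal (exp (-x)) * f x := by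
  rw [show expMeasure 1 = volume.withDensity (exponentialPDF 1) from rfl,
    lintegral_withDensity_eq_lintegral_mul_non_measurable (f := exponentialPDF 1) _
      (measurable_exponentialPDFReal 1).ennreal_ofReal (ae_of_all _ fun _ => ENNReal.ofReal_lt_top),
    ← lintegral_indicator measurableSet_Ici]
  congr with x
  by_cases hx : 0 ≤ x
  · simp [exponentialPDF_of_nonneg hx, hx]
  · simp [exponentialPDF_of_neg (not_le.1 hx), hx]

lemma one_sub_expMeasure_one_Ioi_mul_pow {a b : ℝ} (ha : 0 ≤ a) (hb : 0 ≤ b) (m : ℕ) :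
    (1 - expMeasure 1 (Ioi a) * expMeasure 1 (Ioi b)) ^ m
      = ENNReal.ofReal ((1 - exp (-a) * exp (-b)) ^ m) := by
  have hle : exp (-a) * exp (-b) ≤ 1 :=
    mul_le_one₀ (exp_le_one_iff.2 (neg_nonpos.2 ha)) (exp_nonneg _)
      (exp_le_one_iff.2 (neg_nonpos.2 hb))
  rw [expMeasure_one_Ioi ha, expMeasure_one_Ioi hb, ← ENNReal.ofReal_mul (exp_nonneg _),
    ← ENNReal.ofReal_one, ← ENNReal.ofReal_sub _ (by positivity),
    ← ENNReal.ofReal_pow (sub_nonneg.2 hle)]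

end ExponentialLaw

section RecordProbability

open Real

lemma MeasureTheory.Measure.pi_setOf_forall_succAbove {α : Type*} [MeasurableSpace α]
    (μ : Measure α) [SigmaFinite μ] {m : ℕ} (i : Fin (m + 1)) {B : Set (α × α)}
    (hB : MeasurableSet B) :
    Measure.pi (fun _ => μ) {p | ∀ k, (p i, p (i.succAbove k)) ∈ B}
      = ∫⁻ x, μ (Prod.mk x ⁻¹' B) ^ m ∂μ := by
  have hB' : MeasurableSet {z : α × (Fin m → α) | ∀ k, (z.1, z.2 k) ∈ B} := by
    measurability
  change Measure.pi _ (MeasurableEquiv.piFinSuccAbove (fun _ => α) i ⁻¹'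
    {z : α × (Fin m → α) | ∀ k, (z.1, z.2 k) ∈ B}) = _
  rw [(measurePreserving_piFinSuccAbove (fun _ => μ) i).measure_preimage hB'.nullMeasurableSet,
    Measure.prod_apply hB']
  refine lintegral_congr fun x => ?_
  rw [show Prod.mk x ⁻¹' {z : α × (Fin m → α) | ∀ k, (z.1, z.2 k) ∈ B}
      = univ.pi fun _ => Prod.mk x ⁻¹' B by ext; simp,
    Measure.pi_pi, Finset.prod_const, Finset.card_univ, Fintype.card_fin]

lemma MeasureTheory.Measure.pi_setOf_not_forall_lt {ι : Type*} [Fintype ι]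
    (μ : ι → Measure ℝ) [∀ i, IsProbabilityMeasure (μ i)] (x : ι → ℝ) :
    Measure.pi μ {y | ¬ ∀ l, x l < y l} = 1 - ∏ l, μ l (Ioi (x l)) := by
  rw [show {y | ¬ ∀ l, x l < y l} = (univ.pi fun l => Ioi (x l))ᶜ by ext; simp,
    prob_compl_eq_one_sub (.univ_pi fun _ => measurableSet_Ioi), Measure.pi_pi]

lemma measurable_expMeasure_one_Ioi : Measurable fun t => expMeasure 1 (Ioi t) :=
  Antitone.measurable fun _ _ hst => measure_mono (Ioi_subset_Ioi hst)

lemma lintegral_one_sub_expMeasure_one_Ioi_mul_pow {a : ℝ} (ha : 0 ≤ a) (m : ℕ) :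
    ∫⁻ b, (1 - expMeasure 1 (Ioi a) * expMeasure 1 (Ioi b)) ^ m ∂expMeasure 1
      = ENNReal.ofReal ((1 - (1 - exp (-a)) ^ (m + 1)) / ((m + 1) * exp (-a))) := by
  rw [lintegral_expMeasure_one, ← lintegral_exp_neg_mul_one_sub_mul_exp_neg_pow (exp_pos _)
    (exp_le_one_iff.2 (neg_nonpos.2 ha))]
  refine setLIntegral_congr_fun measurableSet_Ici fun b hb => ?_
  rw [one_sub_expMeasure_one_Ioi_mul_pow ha hb, ← ENNReal.ofReal_mul (exp_nonneg _),
    mul_comm (exp (-a))]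

lemma lintegral_pi_one_sub_expMeasure_one_Ioi_pow (m : ℕ) :
    ∫⁻ x : Fin 2 → ℝ, (1 - expMeasure 1 (Ioi (x 0)) * expMeasure 1 (Ioi (x 1))) ^ m
        ∂Measure.pi (fun _ => expMeasure 1)
      = ENNReal.ofReal ((∑ k ∈ Finset.range (m + 1), 1 / ((k : ℝ) + 1)) / (m + 1)) := by
  have hf : Measurable fun z : ℝ × ℝ =>
      (1 - expMeasure 1 (Ioi z.1) * expMeasure 1 (Ioi z.2)) ^ m :=
    (measurable_const.sub ((measurable_expMeasure_one_Ioi.comp measurable_fst).mul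
      (measurable_expMeasure_one_Ioi.comp measurable_snd))).pow_const m
  refine ((measurePreserving_piFinTwo fun _ => expMeasure 1).lintegral_comp hf).trans ?_
  rw [lintegral_prod _ hf.aemeasurable, lintegral_expMeasure_one,
    ← lintegral_one_sub_one_sub_exp_neg_pow_div (m + 1) (by positivity : (0 : ℝ) < m + 1)]
  refine setLIntegral_congr_fun measurableSet_Ici fun a ha => ?_
  rw [lintegral_one_sub_expMeasure_one_Ioi_mul_pow ha, ← ENNReal.ofReal_mul (exp_nonneg _)]
  congr 1
  field_simp

lemma pi_expMeasure_setOf_isRecord {m : ℕ} (i : Fin (m + 1)) :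
    Measure.pi (fun _ : Fin (m + 1) => Measure.pi fun _ : Fin 2 => expMeasure 1)
        {p | IsRecord p i}
      = ENNReal.ofReal ((∑ k ∈ Finset.range (m + 1), 1 / ((k : ℝ) + 1)) / (m + 1)) := by
  set B := {z : (Fin 2 → ℝ) × (Fin 2 → ℝ) | ¬ ∀ j, z.1 j < z.2 j}
  have hB : MeasurableSet B := by measurability
  have hrec : {p : Fin (m + 1) → Fin 2 → ℝ | IsRecord p i}
      = {p | ∀ k, (p i, p (i.succAbove k)) ∈ B} := by
    ext p
    simp only [IsRecord, B, mem_ofPred_eq, Fin.forall_iff_succAbove i, lt_irrefl, forall_const,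
      not_false_eq_true, true_and]
  rw [hrec, Measure.pi_setOf_forall_succAbove _ i hB]
  simp only [B, preimage_ofPred_eq, Measure.pi_setOf_not_forall_lt, Fin.prod_univ_two]
  exact lintegral_pi_one_sub_expMeasure_one_Ioi_pow m

end RecordProbability

section Expectation

variable {n : ℕ}

lemma measurableSet_setOf_isRecord (i : Fin n) :
    MeasurableSet {p : Fin n → Fin 2 → ℝ | IsRecord p i} := by
  unfold IsRecord
  measurability

lemma recCount_eq_sum_indicator (p : Fin n → Fin 2 → ℝ) :
    (recCount p : ℝ) = ∑ i, {q | IsRecord q i}.indicator 1 p := by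
  classical
  simp only [indicator_apply, mem_ofPred_eq, Pi.one_apply, Finset.sum_boole]
  rw [recCount, Nat.card_eq_fintype_card, Fintype.card_subtype]
  simp [IsRecord]

lemma measurable_recCount : Measurable fun p : Fin n → Fin 2 → ℝ => (recCount p : ℝ) := by
  simp_rw [recCount_eq_sum_indicator]
  exact Finset.measurable_sum _ fun i _ =>
    measurable_const.indicator (measurableSet_setOf_isRecord i)

lemma integrable_recCount (ν : Measure (Fin n → Fin 2 → ℝ)) [IsFiniteMeasure ν] :
    Integrable (fun p => (recCount p : ℝ)) ν := by
  simp_rw [recCount_eq_sum_indicator]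
  exact integrable_finsetSum _ fun i _ =>
    (integrable_const 1).indicator (measurableSet_setOf_isRecord i)

lemma integral_recCount_pi_expMeasure (n : ℕ) :
    ∫ p, (recCount p : ℝ)
        ∂Measure.pi (fun _ : Fin n => Measure.pi fun _ : Fin 2 => expMeasure 1)
      = ∑ k ∈ Finset.range n, 1 / ((k : ℝ) + 1) := by
  simp_rw [recCount_eq_sum_indicator]
  rw [integral_finsetSum _ fun i _ =>
    (integrable_const 1).indicator (measurableSet_setOf_isRecord i)]
  simp_rw [integral_indicator_one (measurableSet_setOf_isRecord _)]
  cases n with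
  | zero => simp
  | succ m =>
    simp only [measureReal_def, pi_expMeasure_setOf_isRecord, Finset.sum_const, Finset.card_univ,
      Fintype.card_fin, nsmul_eq_mul]
    rw [ENNReal.toReal_ofReal (by positivity)]
    push_cast
    field_simp

end Expectation

lemma ProbabilityTheory.IndepFun.ae_ne {Ω β : Type*} [MeasurableSpace Ω] [MeasurableSpace β]
    [MeasurableEq β] {μ : Measure Ω} [IsFiniteMeasure μ] {X Y : Ω → β} (h : IndepFun X Y μ)
    (hX : AEMeasurable X μ) (hY : AEMeasurable Y μ) (hY₀ : ∀ y, μ.map Y {y} = 0) :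
    ∀ᵐ ω ∂μ, X ω ≠ Y ω := by
  have hD : MeasurableSet {z : β × β | z.1 = z.2} :=
    measurableSet_eq_fun measurable_fst measurable_snd
  rw [ae_iff]
  simp only [ne_eq, not_not]
  change μ ((fun ω => (X ω, Y ω)) ⁻¹' {z | z.1 = z.2}) = 0
  rw [← Measure.map_apply_of_aemeasurable (hX.prodMk hY) hD, h.map_prod_eq_prod_map_map hX hY,
    Measure.prod_apply hD]
  simp [preimage_ofPred_eq, hY₀]

section Sample

variable {Ω : Type*} [MeasurableSpace Ω] {μ : Measure Ω} {n : ℕ}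
  {X : Fin n → Ω → Fin 2 → ℝ}

lemma map_coord_eq_expMeasure (hmeas : ∀ i, Measurable (X i))
    (hlaw : ∀ i, μ.map (X i) = Measure.pi fun _ : Fin 2 => expMeasure 1)
    (i : Fin n) (j : Fin 2) :
    μ.map (fun ω => X i ω j) = expMeasure 1 := by
  rw [show (fun ω => X i ω j) = Function.eval j ∘ X i from rfl,
    ← Measure.map_map (measurable_pi_apply j) (hmeas i), hlaw i,
    (measurePreserving_eval _ j).map_eq]

lemma ae_forall_coord_pos (hmeas : ∀ i, Measurable (X i))
    (hlaw : ∀ i, μ.map (X i) = Measure.pi fun _ : Fin 2 => expMeasure 1) :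
    ∀ᵐ ω ∂μ, ∀ i j, 0 < X i ω j := by
  refine ae_all_iff.2 fun i => ae_all_iff.2 fun j => ae_of_ae_map (hmeas i).eval.aemeasurable ?_
  rw [map_coord_eq_expMeasure hmeas hlaw]
  exact ae_expMeasure_one_pos

lemma ae_forall_coord_injective (hmeas : ∀ i, Measurable (X i)) (hindep : iIndepFun X μ)
    (hlaw : ∀ i, μ.map (X i) = Measure.pi fun _ : Fin 2 => expMeasure 1) :
    ∀ᵐ ω ∂μ, ∀ j, Injective fun i => X i ω j := by
  have := hindep.isProbabilityMeasure
  refine ae_all_iff.2 fun j => ?_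
  have hne : ∀ᵐ ω ∂μ, ∀ i k, i ≠ k → X i ω j ≠ X k ω j := by
    refine ae_all_iff.2 fun i => ae_all_iff.2 fun k => ?_
    by_cases hik : i = k
    · exact ae_of_all _ fun _ h => absurd hik h
    · have hindep_ik := (hindep.indepFun hik).comp (measurable_pi_apply j) (measurable_pi_apply j)
      refine (hindep_ik.ae_ne (hmeas i).eval.aemeasurable (hmeas k).eval.aemeasurable
        fun y => ?_).mono fun _ h _ => h
      change μ.map (fun ω => X k ω j) {y} = 0
      rw [map_coord_eq_expMeasure hmeas hlaw]
      exact measure_singleton y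
  filter_upwards [hne] with ω hω i k hik
  exact not_imp_not.1 (hω i k) hik

lemma ae_genCount_eq_recCount_add_one (hmeas : ∀ i, Measurable (X i)) (hindep : iIndepFun X μ)
    (hlaw : ∀ i, μ.map (X i) = Measure.pi fun _ : Fin 2 => expMeasure 1) :
    ∀ᵐ ω ∂μ, genCount (fun i => X i ω) = recCount (fun i => X i ω) + 1 := by
  filter_upwards [ae_forall_coord_pos hmeas hlaw, ae_forall_coord_injective hmeas hindep hlaw]
    with ω hpos hinj
  exact genCount_eq_recCount_add_one hpos (hinj 0) (hinj 1)

lemma integrable_recCount_sample (hmeas : ∀ i, Measurable (X i)) (hindep : iIndepFun X μ) :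
    Integrable (fun ω => (recCount fun i => X i ω : ℝ)) μ := by
  have := hindep.isProbabilityMeasure
  exact (integrable_recCount _).comp_measurable (measurable_pi_lambda _ hmeas)

lemma integral_recCount_sample (hmeas : ∀ i, Measurable (X i)) (hindep : iIndepFun X μ)
    (hlaw : ∀ i, μ.map (X i) = Measure.pi fun _ : Fin 2 => expMeasure 1) :
    ∫ ω, (recCount fun i => X i ω : ℝ) ∂μ
      = ∑ k ∈ Finset.range n, 1 / ((k : ℝ) + 1) := by
  rw [← integral_map (measurable_pi_lambda _ hmeas).aemeasurable
    measurable_recCount.aestronglyMeasurable,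
    hindep.map_fun_eq_pi_map fun i => (hmeas i).aemeasurable]
  simp only [hlaw]
  exact integral_recCount_pi_expMeasure n

end Sample

theorem stmt14_general {Ω : Type*} [MeasurableSpace Ω] (μ : Measure Ω)
    (n : ℕ) (X : Fin n → Ω → Fin 2 → ℝ)
    (hmeas : ∀ i, Measurable (X i))
    (hindep : iIndepFun X μ)
    (hlaw : ∀ i, μ.map (X i) = Measure.pi fun _ : Fin 2 => expMeasure 1) :
    (∀ᵐ ω ∂μ, genCount (fun i => X i ω) = recCount (fun i => X i ω) + 1) ∧
      ∫ ω, (genCount (fun i => X i ω) : ℝ) ∂μ =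
        (∑ k ∈ Finset.range n, (1 : ℝ) / (k + 1)) + 1 ∧
      ∫ ω, (genCount (fun i => X i ω) : ℝ) ∂μ =
        (∫ ω, (recCount (fun i => X i ω) : ℝ) ∂μ) + 1 := by
  have := hindep.isProbabilityMeasure
  have hae := ae_genCount_eq_recCount_add_one hmeas hindep hlaw
  have hmean : ∫ ω, (genCount (fun i => X i ω) : ℝ) ∂μ
      = (∫ ω, (recCount (fun i => X i ω) : ℝ) ∂μ) + 1 := by
    have hcongr : (fun ω => (genCount (fun i => X i ω) : ℝ))
        =ᵐ[μ] fun ω => (recCount (fun i => X i ω) : ℝ) + 1 :=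
      hae.mono fun ω h => by simp [h]
    rw [integral_congr_ae hcongr,
      integral_add (integrable_recCount_sample hmeas hindep) (integrable_const 1)]
    simp
  exact ⟨hae, by rw [hmean, integral_recCount_sample hmeas hindep hlaw], hmean⟩

theorem stmt14 {Ω : Type*} [MeasurableSpace Ω] (μ : Measure Ω) [IsProbabilityMeasure μ]
    (n : ℕ) (X : Fin n → Ω → Fin 2 → ℝ)
    (hmeas : ∀ i, Measurable (X i))
    (hindep : iIndepFun X μ)
    (hlaw : ∀ i, μ.map (X i) = Measure.pi fun _ : Fin 2 => expMeasure 1) :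
    (∀ᵐ ω ∂μ, genCount (fun i => X i ω) = recCount (fun i => X i ω) + 1) ∧
      ∫ ω, (genCount (fun i => X i ω) : ℝ) ∂μ =
        (∑ k ∈ Finset.range n, (1 : ℝ) / (k + 1)) + 1 ∧
      ∫ ω, (genCount (fun i => X i ω) : ℝ) ∂μ =
        (∫ ω, (recCount (fun i => X i ω) : ℝ) ∂μ) + 1 :=
  stmt14_general μ n X hmeas hindep hlaw
end
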